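/- (No false alarms in nominal operation.) Let F, S, H, K1, K̂, B, K be real n×n matrices with K̂ = K1 + F·H, and let κ, μ > 0 satisfy ‖exp(s·F)‖ ≤ κ·e^{−μ·s} for all s ≥ 0. Let w : ℝ → ℝⁿ be continuous with ‖w(t)‖ ≤ w̄ and ρ : ℝ → ℝⁿ be continuously differentiable with ‖ρ(t)‖ ≤ ρ̄ for all t. Let e : ℝ → ℝⁿ be differentiable and satisfy, for all t ≥ 0, ė(t) = F·e(t) + S·(w(t) + B·K·ρ(t)) − K1·ρ(t) − H·ρ̇(t), and suppose ‖e(0)‖ ≤ ē₀. Then for all t ≥ 0 the residual r(t) = e(t) + ρ(t) satisfies ‖r(t)‖ ≤ κ·e^{−μ·t}·(ē₀ + ‖H‖·ρ̄) + ‖H‖·ρ̄ + ∫_{0}^{t} κ·e^{−μ(t−τ)}·(‖S‖·w̄ + ‖S·B·K − K̂‖·ρ̄) dτ + ρ̄. -/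

import Mathlib

/-! The shifted error `z = e + H ρ` obeys `ż = F z + g` with `g = S w + (S B K − K̂) ρ`:
the relation `K̂ = K1 + F H` is exactly what absorbs the `H ρ̇` term. By variation of constants,
`z t = exp (t F) z 0 + ∫₀ᵗ exp ((t − τ) F) g τ dτ`, so the decay of `exp (s F)` bounds `‖z t‖`,
and `r = z − H ρ + ρ` adds the two constant terms `‖H‖ ρ̄` and `ρ̄`. -/

open NormedSpace MeasureTheory

section ExpSmul

variable {𝔸 : Type*} [NormedRing 𝔸] [NormedAlgebra ℝ 𝔸] [CompleteSpace 𝔸]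

theorem exp_add_smul (x : 𝔸) (s t : ℝ) : exp ((s + t) • x) = exp (s • x) * exp (t • x) := by
  let +nondep : NormedAlgebra ℚ 𝔸 := .restrictScalars ℚ ℝ 𝔸
  rw [add_smul, exp_add_of_commute ((Commute.refl x).smul_left s |>.smul_right t)]

theorem exp_smul_mul_exp_neg_smul (x : 𝔸) (t : ℝ) : exp (t • x) * exp ((-t) • x) = 1 := by
  rw [← exp_add_smul, add_neg_cancel, zero_smul, exp_zero]

end ExpSmul

section VariationOfConstants

variable {E : Type*} [NormedAddCommGroup E] [NormedSpace ℝ E] [CompleteSpace E]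
  {A : E →L[ℝ] E} {z g : ℝ → E}

theorem hasDerivAt_exp_neg_smul_apply {τ : ℝ} (hz : HasDerivAt z (A (z τ) + g τ) τ) :
    HasDerivAt (fun u : ℝ => exp ((-u) • A) (z u)) (exp ((-τ) • A) (g τ)) τ := by
  have hexp := (hasDerivAt_exp_smul_const A (-τ)).scomp τ (hasDerivAt_neg τ)
  refine (hexp.clm_apply hz).congr_deriv ?_
  simp only [Function.comp_apply, smul_apply, mul_apply_eq_comp, map_add]
  module

theorem eq_exp_smul_add_integral_of_hasDerivAt {t : ℝ} (ht : 0 ≤ t)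
    (hz : ∀ τ ∈ Set.Icc 0 t, HasDerivAt z (A (z τ) + g τ) τ) (hg : Continuous g) :
    z t = exp (t • A) (z 0) + ∫ τ in (0 : ℝ)..t, exp ((t - τ) • A) (g τ) := by
  have hint : IntervalIntegrable (fun τ : ℝ => exp ((-τ) • A) (g τ)) volume 0 t :=
    (((differentiable_exp_smul_const ℝ A).continuous.comp continuous_neg).clm_apply
      hg).intervalIntegrable 0 t
  have hFTC : ∫ τ in (0 : ℝ)..t, exp ((-τ) • A) (g τ) = exp ((-t) • A) (z t) - z 0 := by
    rw [intervalIntegral.integral_eq_sub_of_hasDerivAt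
      (fun τ hτ => hasDerivAt_exp_neg_smul_apply (hz τ (Set.uIcc_of_le ht ▸ hτ))) hint]
    simp
  calc z t = exp (t • A) (exp ((-t) • A) (z t)) := by
        rw [← mul_apply_eq_comp, exp_smul_mul_exp_neg_smul A t, one_apply_eq_self]
    _ = exp (t • A) (z 0 + ∫ τ in (0 : ℝ)..t, exp ((-τ) • A) (g τ)) := by
        rw [hFTC, add_sub_cancel]
    _ = exp (t • A) (z 0) + ∫ τ in (0 : ℝ)..t, exp ((t - τ) • A) (g τ) := by
        rw [map_add, ← ContinuousLinearMap.intervalIntegral_comp_comm _ hint]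
        congr 1
        refine intervalIntegral.integral_congr fun τ _ => ?_
        rw [← mul_apply_eq_comp, ← exp_add_smul A t (-τ), sub_eq_add_neg]

theorem norm_le_of_hasDerivAt_of_norm_exp_smul_le {t κ μ C : ℝ} (ht : 0 ≤ t)
    (hdecay : ∀ s : ℝ, 0 ≤ s → ‖exp (s • A)‖ ≤ κ * Real.exp (-μ * s))
    (hz : ∀ τ ∈ Set.Icc 0 t, HasDerivAt z (A (z τ) + g τ) τ) (hg : Continuous g)
    (hgC : ∀ τ, ‖g τ‖ ≤ C) :
    ‖z t‖ ≤ κ * Real.exp (-μ * t) * ‖z 0‖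
      + ∫ τ in (0 : ℝ)..t, κ * Real.exp (-μ * (t - τ)) * C := by
  have hdecay_nonneg : ∀ s, 0 ≤ s → 0 ≤ κ * Real.exp (-μ * s) :=
    fun s hs => (norm_nonneg _).trans (hdecay s hs)
  have hcont : Continuous fun τ : ℝ => exp ((t - τ) • A) (g τ) :=
    ((differentiable_exp_smul_const ℝ A).continuous.comp (continuous_sub_left t)).clm_apply hg
  rw [eq_exp_smul_add_integral_of_hasDerivAt ht hz hg]
  refine norm_add_le_of_le ((exp (t • A)).le_opNorm_of_le le_rfl |>.trans
    (mul_le_mul_of_nonneg_right (hdecay t ht) (norm_nonneg _))) ?_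
  have hbound : Continuous fun τ : ℝ => κ * Real.exp (-μ * (t - τ)) * C := by fun_prop
  refine (intervalIntegral.norm_integral_le_integral_norm ht).trans <|
    intervalIntegral.integral_mono_on ht (hcont.norm.intervalIntegrable 0 t)
      (hbound.intervalIntegrable 0 t) fun τ hτ => ?_
  have hs : 0 ≤ t - τ := sub_nonneg.2 hτ.2
  exact ((exp ((t - τ) • A)).le_opNorm _).trans
    (mul_le_mul (hdecay _ hs) (hgC τ) (norm_nonneg _) (hdecay_nonneg _ hs))

end VariationOfConstants

theorem no_false_alarms_general {n : ℕ}
    (F S H K1 Khat B K : EuclideanSpace ℝ (Fin n) →L[ℝ] EuclideanSpace ℝ (Fin n))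
    (hKhat : Khat = K1 + F * H)
    (κ μ : ℝ)
    (hFdecay : ∀ s : ℝ, 0 ≤ s → ‖NormedSpace.exp (s • F)‖ ≤ κ * Real.exp (-μ * s))
    (w ρ ρ' : ℝ → EuclideanSpace ℝ (Fin n))
    (wbar ρbar : ℝ)
    (hw : Continuous w)
    (hρ : ∀ t : ℝ, HasDerivAt ρ (ρ' t) t)
    (hwbound : ∀ t : ℝ, ‖w t‖ ≤ wbar)
    (hρbound : ∀ t : ℝ, ‖ρ t‖ ≤ ρbar)
    (e : ℝ → EuclideanSpace ℝ (Fin n))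
    (hode : ∀ t : ℝ, 0 ≤ t →
      HasDerivAt e
        (F (e t) + S (w t + (B * K) (ρ t)) - K1 (ρ t) - H (ρ' t)) t)
    (ebar0 : ℝ) (hinit : ‖e 0‖ ≤ ebar0) :
    ∀ t : ℝ, 0 ≤ t →
      ‖e t + ρ t‖ ≤
        κ * Real.exp (-μ * t) * (ebar0 + ‖H‖ * ρbar) + ‖H‖ * ρbar
        + (∫ τ in (0:ℝ)..t,
            κ * Real.exp (-μ * (t - τ)) * (‖S‖ * wbar + ‖S * B * K - Khat‖ * ρbar))
        + ρbar := by
  intro t ht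
  set z := fun τ => e τ + H (ρ τ)
  set g := fun τ => S (w τ) + (S * B * K - Khat) (ρ τ)
  have hz : ∀ τ ∈ Set.Icc 0 t, HasDerivAt z (F (z τ) + g τ) τ := fun τ hτ =>
    ((hode τ hτ.1).add (H.hasFDerivAt.comp_hasDerivAt τ (hρ τ))).congr_deriv <| by
      simp only [z, g, hKhat, map_add, mul_apply_eq_comp, add_apply, sub_apply]
      abel
  have hρc : Continuous ρ := continuous_iff_continuousAt.2 fun τ => (hρ τ).continuousAt
  have hg : Continuous g := (S.continuous.comp hw).add ((S * B * K - Khat).continuous.comp hρc)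
  have hgC : ∀ τ, ‖g τ‖ ≤ ‖S‖ * wbar + ‖S * B * K - Khat‖ * ρbar := fun τ =>
    norm_add_le_of_le (S.le_opNorm_of_le (hwbound τ))
      ((S * B * K - Khat).le_opNorm_of_le (hρbound τ))
  have hz0 : ‖z 0‖ ≤ ebar0 + ‖H‖ * ρbar := norm_add_le_of_le hinit (H.le_opNorm_of_le (hρbound 0))
  have hzt := norm_le_of_hasDerivAt_of_norm_exp_smul_le ht hFdecay hz hg hgC
  have hdecay_nonneg : 0 ≤ κ * Real.exp (-μ * t) := (norm_nonneg _).trans (hFdecay t ht)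
  calc ‖e t + ρ t‖ ≤ ‖z t‖ + ‖H (ρ t)‖ + ‖ρ t‖ := by
        rw [show e t = z t - H (ρ t) by simp [z]]
        exact norm_add_le_of_le (norm_sub_le _ _) le_rfl
    _ ≤ _ := by
        have hz0_decay := mul_le_mul_of_nonneg_left hz0 hdecay_nonneg
        linarith [H.le_opNorm_of_le (hρbound t), hρbound t]

/-- **No false alarms in nominal operation (Statement 7).**
Matrices are continuous linear maps on Euclidean space (so `‖·‖` is the
operator norm induced by the Euclidean norm), with matrix product `*`.
Assume `Khat = K1 + F·H`, `κ, μ > 0` with `‖exp(s F)‖ ≤ κ e^{−μ s}` for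
`s ≥ 0`, bounded noises (`w` continuous with `‖w‖ ≤ wbar`, `ρ` C¹ with
`‖ρ‖ ≤ ρbar`), the nominal error dynamics
`ė(t) = F e(t) + S (w(t) + B K ρ(t)) − K1 ρ(t) − H ρ̇(t)` for `t ≥ 0`, and
`‖e(0)‖ ≤ ebar0`. Then for all `t ≥ 0` the residual `r(t) = e(t) + ρ(t)`
stays below the time-varying detection threshold, i.e.
`‖r(t)‖ ≤ κ e^{−μ t} (ebar0 + ‖H‖ ρbar) + ‖H‖ ρbar
          + ∫_0^t κ e^{−μ (t−τ)} (‖S‖ wbar + ‖S B K − Khat‖ ρbar) dτ + ρbar`. -/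
theorem no_false_alarms {n : ℕ}
    (F S H K1 Khat B K : EuclideanSpace ℝ (Fin n) →L[ℝ] EuclideanSpace ℝ (Fin n))
    (hKhat : Khat = K1 + F * H)
    (κ μ : ℝ) (hκ : 0 < κ) (hμ : 0 < μ)
    (hFdecay : ∀ s : ℝ, 0 ≤ s → ‖NormedSpace.exp (s • F)‖ ≤ κ * Real.exp (-μ * s))
    (w ρ ρ' : ℝ → EuclideanSpace ℝ (Fin n))
    (wbar ρbar : ℝ)
    (hw : Continuous w)
    (hρ : ∀ t : ℝ, HasDerivAt ρ (ρ' t) t) (hρ' : Continuous ρ')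
    (hwbound : ∀ t : ℝ, ‖w t‖ ≤ wbar)
    (hρbound : ∀ t : ℝ, ‖ρ t‖ ≤ ρbar)
    (e : ℝ → EuclideanSpace ℝ (Fin n))
    (hode : ∀ t : ℝ, 0 ≤ t →
      HasDerivAt e
        (F (e t) + S (w t + (B * K) (ρ t)) - K1 (ρ t) - H (ρ' t)) t)
    (ebar0 : ℝ) (hinit : ‖e 0‖ ≤ ebar0) :
    ∀ t : ℝ, 0 ≤ t →
      ‖e t + ρ t‖ ≤
        κ * Real.exp (-μ * t) * (ebar0 + ‖H‖ * ρbar) + ‖H‖ * ρbar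
        + (∫ τ in (0:ℝ)..t,
            κ * Real.exp (-μ * (t - τ)) * (‖S‖ * wbar + ‖S * B * K - Khat‖ * ρbar))
        + ρbar :=
  no_false_alarms_general F S H K1 Khat B K hKhat κ μ hFdecay w ρ ρ' wbar ρbar hw hρ hwbound hρbound
    e hode ebar0 hinit
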